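/- arXiv:1803.09347 — 3 statements merged into one kernel-verified Lean document; each statement's English description precedes it below -/
import Mathlib

section
/- For every probability measure Q on Ω that is equivalent to P, such that W is Q-integrable and D_KL(Q‖P) < ∞, one has ΔF ≤ E_Q[W] + β⁻¹ D_KL(Q‖P), and equality holds if and only if Q = P*. (This inequality is the paper's generalization of the second law of thermodynamics, eq. (2.47).) -/
open MeasureTheory

/-- Kullback-Leibler divergence `D_KL(Q ‖ P) = ∫ log (dQ/dP) dQ`. -/
noncomputable def klDiv' {Ω : Type*} [MeasurableSpace Ω] (Q P : Measure Ω) : ℝ :=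
  ∫ x, Real.log ((Q.rnDeriv P x).toReal) ∂Q

/-- Free energy difference `ΔF = -β⁻¹ ln ∫ e^{-βW} dP`. -/
noncomputable def deltaF {Ω : Type*} [MeasurableSpace Ω] (β : ℝ) (W : Ω → ℝ)
    (P : Measure Ω) : ℝ :=
  -β⁻¹ * Real.log (∫ x, Real.exp (-β * W x) ∂P)

/-- The optimal (zero-variance) tilted measure `P*` with `dP*/dP = e^{-β(W-ΔF)}`. -/
noncomputable def Pstar {Ω : Type*} [MeasurableSpace Ω] (β : ℝ) (W : Ω → ℝ)
    (P : Measure Ω) : Measure Ω :=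
  P.withDensity (fun x => ENNReal.ofReal (Real.exp (-β * (W x - deltaF β W P))))

/-!
`P*` is the Gibbs measure `P.tilted (-β W)`, and the tilting formula for log-likelihood ratios gives
`E_Q[W] + β⁻¹ D_KL(Q‖P) = ΔF + β⁻¹ D_KL(Q‖P*)`. Gibbs' inequality `D_KL(Q‖P*) ≥ 0`, with
equality exactly when `Q = P*`, then yields both the inequality and its equality case.
-/

open Real

section Gibbs

variable {α : Type*} [MeasurableSpace α] {μ ν : Measure α}
  [IsProbabilityMeasure μ] [IsProbabilityMeasure ν]

lemma integral_llr_nonneg_of_isProbabilityMeasure (hμν : μ ≪ ν) : 0 ≤ ∫ x, llr μ ν x ∂μ := by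
  rw [← InformationTheory.toReal_klDiv_of_measure_eq hμν (by simp)]
  exact ENNReal.toReal_nonneg

lemma integral_llr_eq_zero_iff_of_isProbabilityMeasure (hμν : μ ≪ ν)
    (h_int : Integrable (llr μ ν) μ) : ∫ x, llr μ ν x ∂μ = 0 ↔ μ = ν := by
  rw [← InformationTheory.toReal_klDiv_of_measure_eq hμν (by simp),
    ENNReal.toReal_eq_zero_iff, or_iff_left (InformationTheory.klDiv_ne_top hμν h_int),
    InformationTheory.klDiv_eq_zero_iff]

end Gibbs

section Pstar

variable {Ω : Type*} [MeasurableSpace Ω] {P Q : Measure Ω} {β : ℝ} {W : Ω → ℝ}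

lemma Pstar_eq_tilted [NeZero P] (hβ : β ≠ 0)
    (hexp : Integrable (fun x => exp (-β * W x)) P) :
    Pstar β W P = P.tilted fun x => -β * W x := by
  have hZ : 0 < ∫ x, exp (-β * W x) ∂P := integral_exp_pos hexp
  unfold Pstar Measure.tilted deltaF
  congr with x
  rw [show -β * (W x - -β⁻¹ * log (∫ x, exp (-β * W x) ∂P))
      = -β * W x - log (∫ x, exp (-β * W x) ∂P) by field_simp; ring,
    exp_sub, exp_log hZ]

lemma isProbabilityMeasure_Pstar [NeZero P] (hβ : β ≠ 0)
    (hexp : Integrable (fun x => exp (-β * W x)) P) :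
    IsProbabilityMeasure (Pstar β W P) := by
  rw [Pstar_eq_tilted hβ hexp]
  exact isProbabilityMeasure_tilted hexp

lemma absolutelyContinuous_Pstar [NeZero P] (hβ : β ≠ 0)
    (hexp : Integrable (fun x => exp (-β * W x)) P) (hQP : Q ≪ P) : Q ≪ Pstar β W P := by
  rw [Pstar_eq_tilted hβ hexp]
  exact hQP.trans (absolutelyContinuous_tilted hexp)

lemma integrable_llr_Pstar [IsFiniteMeasure Q] [SigmaFinite P] [NeZero P] (hβ : β ≠ 0)
    (hexp : Integrable (fun x => exp (-β * W x)) P) (hQP : Q ≪ P) (hWQ : Integrable W Q)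
    (hKL : Integrable (llr Q P) Q) : Integrable (llr Q (Pstar β W P)) Q := by
  rw [Pstar_eq_tilted hβ hexp]
  exact integrable_llr_tilted_right hQP (hWQ.const_mul (-β)) hKL hexp

lemma integral_add_inv_mul_klDiv'_eq_deltaF_add_integral_llr_Pstar [IsProbabilityMeasure Q]
    [SigmaFinite P] [NeZero P] (hβ : β ≠ 0) (hexp : Integrable (fun x => exp (-β * W x)) P)
    (hQP : Q ≪ P) (hWQ : Integrable W Q) (hKL : Integrable (llr Q P) Q) :
    ∫ x, W x ∂Q + β⁻¹ * klDiv' Q P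
      = deltaF β W P + β⁻¹ * ∫ x, llr Q (Pstar β W P) x ∂Q := by
  rw [Pstar_eq_tilted hβ hexp,
    integral_llr_tilted_right hQP (hWQ.const_mul (-β)) hexp hKL, integral_const_mul]
  unfold deltaF klDiv' llr
  field_simp
  ring

end Pstar

theorem second_law_generalized_general
    {Ω : Type*} [MeasurableSpace Ω]
    (P : Measure Ω) [IsProbabilityMeasure P]
    (β : ℝ) (hβ : 0 < β)
    (W : Ω → ℝ)
    (hexp : Integrable (fun x => Real.exp (-β * W x)) P)
    (Q : Measure Ω) [IsProbabilityMeasure Q]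
    (hQP : Q ≪ P)
    (hWQ : Integrable W Q)
    (hKLfin : Integrable (fun x => Real.log ((Q.rnDeriv P x).toReal)) Q) :
    deltaF β W P ≤ ∫ x, W x ∂Q + β⁻¹ * klDiv' Q P ∧
      (deltaF β W P = ∫ x, W x ∂Q + β⁻¹ * klDiv' Q P ↔ Q = Pstar β W P) := by
  have := isProbabilityMeasure_Pstar hβ.ne' hexp
  have hQPstar : Q ≪ Pstar β W P := absolutelyContinuous_Pstar hβ.ne' hexp hQP
  rw [integral_add_inv_mul_klDiv'_eq_deltaF_add_integral_llr_Pstar hβ.ne' hexp hQP hWQ hKLfin,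
    ← integral_llr_eq_zero_iff_of_isProbabilityMeasure hQPstar
      (integrable_llr_Pstar hβ.ne' hexp hQP hWQ hKLfin)]
  refine ⟨le_add_of_nonneg_right ?_, ?_⟩
  · exact mul_nonneg (inv_nonneg.mpr hβ.le) (integral_llr_nonneg_of_isProbabilityMeasure hQPstar)
  · rw [left_eq_add, mul_eq_zero, or_iff_right (inv_ne_zero hβ.ne')]

/-- Generalized second law of thermodynamics (paper eq. (2.47)):
for every probability measure `Q` equivalent to `P` with `W` `Q`-integrable and
finite relative entropy, `ΔF ≤ E_Q[W] + β⁻¹ D_KL(Q‖P)`, with equality iff `Q = P*`. -/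
theorem second_law_generalized
    {Ω : Type*} [MeasurableSpace Ω]
    (P : Measure Ω) [IsProbabilityMeasure P]
    (β : ℝ) (hβ : 0 < β)
    (W : Ω → ℝ) (hW : Measurable W)
    (hexp : Integrable (fun x => Real.exp (-β * W x)) P)
    (hWexp : Integrable (fun x => W x * Real.exp (-β * W x)) P)
    (Q : Measure Ω) [IsProbabilityMeasure Q]
    (hQP : Q ≪ P) (hPQ : P ≪ Q)
    (hWQ : Integrable W Q)
    (hKLfin : Integrable (fun x => Real.log ((Q.rnDeriv P x).toReal)) Q) :
    deltaF β W P ≤ ∫ x, W x ∂Q + β⁻¹ * klDiv' Q P ∧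
      (deltaF β W P = ∫ x, W x ∂Q + β⁻¹ * klDiv' Q P ↔ Q = Pstar β W P) :=
  second_law_generalized_general P β hβ W hexp Q hQP hWQ hKLfin
end

section
/- The generator of the projected diffusion annihilates the reaction coordinate: for every γ ∈ {1,…,d} and every y ∈ ℝⁿ, −Σ_{i,j} (P(y)a(y))_{ij} ∂_jV(y) ∂_iξ_γ(y) + β⁻¹ Σ_{i,j} ∂_j((P a)_{ij})(y) ∂_iξ_γ(y) + β⁻¹ Σ_{i,j} (P(y)a(y))_{ij} ∂²ξ_γ/∂y_i∂y_j(y) = 0, i.e. 𝓛^⊥ ξ_γ ≡ 0 where 𝓛^⊥ = −(Pa)_{ij} ∂_jV ∂_i + β⁻¹ ∂_j(Pa)_{ij} ∂_i + β⁻¹ (Pa)_{ij} ∂²_{ij}. -/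
open Matrix

/-- Partial derivative `∂f/∂y_i` of a scalar function on `ℝⁿ`. -/
noncomputable def pd {ι : Type*} [Fintype ι] [DecidableEq ι]
    (f : (ι → ℝ) → ℝ) (i : ι) (y : ι → ℝ) : ℝ :=
  fderiv ℝ f y (Pi.single i 1)

/-- Jacobian matrix `∇ξ(y)`, the `n × d` matrix with entries `∂ξ_γ/∂y_i`. -/
noncomputable def jac {n d : ℕ} (ξ : (Fin n → ℝ) → (Fin d → ℝ)) (y : Fin n → ℝ) :
    Matrix (Fin n) (Fin d) ℝ :=
  fun i γ => pd (fun z => ξ z γ) i y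

/-- The projection matrix `P(y) = I − a∇ξ Ψ⁻¹ ∇ξᵀ` with `Ψ = ∇ξᵀ a ∇ξ`. -/
noncomputable def projMat {n d : ℕ} (ξ : (Fin n → ℝ) → (Fin d → ℝ))
    (a : (Fin n → ℝ) → Matrix (Fin n) (Fin n) ℝ) (y : Fin n → ℝ) :
    Matrix (Fin n) (Fin n) ℝ :=
  1 - a y * jac ξ y * ((jac ξ y)ᵀ * a y * jac ξ y)⁻¹ * (jac ξ y)ᵀ

/-! Since `Ψ = ∇ξᵀ a ∇ξ` is invertible, `∇ξᵀ (P a) = 0`, i.e. `∑ᵢ (P a)ᵢⱼ ∂ᵢξ_γ ≡ 0` for every `j`.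
This kills the drift term outright. Differentiating the same identity in `y_j` and summing over
`j`, the product rule shows that the divergence term and the second-order term cancel; this needs
the entries of `P a` to be `C¹`, which holds because the entries of `Ψ⁻¹` are rational functions of
those of `Ψ` (Cramer's rule). -/

section MatrixContDiff

variable {𝕜 E : Type*} [NontriviallyNormedField 𝕜] [NormedAddCommGroup E] [NormedSpace 𝕜 E]
  {k : WithTop ℕ∞} {l m p : Type*}

theorem contDiff_matrix_mul_apply [Fintype p] {M : E → Matrix l p 𝕜} {N : E → Matrix p m 𝕜}
    (hM : ∀ i j, ContDiff 𝕜 k fun y => M y i j) (hN : ∀ i j, ContDiff 𝕜 k fun y => N y i j)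
    (i : l) (j : m) : ContDiff 𝕜 k fun y => (M y * N y) i j := by
  simp only [Matrix.mul_apply]
  exact ContDiff.sum fun q _ => (hM i q).mul (hN q j)

variable [Fintype m] [DecidableEq m]

theorem contDiff_matrix_det {M : E → Matrix m m 𝕜} (hM : ∀ i j, ContDiff 𝕜 k fun y => M y i j) :
    ContDiff 𝕜 k fun y => (M y).det := by
  simp only [Matrix.det_apply']
  exact ContDiff.sum fun σ _ => contDiff_const.mul (contDiff_prod fun i _ => hM (σ i) i)

theorem contDiff_matrix_adjugate_apply {M : E → Matrix m m 𝕜}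
    (hM : ∀ i j, ContDiff 𝕜 k fun y => M y i j) (i j : m) :
    ContDiff 𝕜 k fun y => (M y).adjugate i j := by
  simp only [Matrix.adjugate_apply]
  refine contDiff_matrix_det fun i' j' => ?_
  rcases eq_or_ne i' j with rfl | h
  · simpa using contDiff_const
  · simpa [Matrix.updateRow_ne h] using hM i' j'

theorem contDiff_matrix_inv_apply [CompleteSpace 𝕜] {M : E → Matrix m m 𝕜}
    (hM : ∀ i j, ContDiff 𝕜 k fun y => M y i j) (hunit : ∀ y, IsUnit (M y)) (i j : m) :
    ContDiff 𝕜 k fun y => (M y)⁻¹ i j := by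
  simp only [Matrix.inv_def, Ring.inverse_eq_inv', Matrix.smul_apply, smul_eq_mul]
  refine ((contDiff_matrix_det hM).inv fun y => ?_).mul (contDiff_matrix_adjugate_apply hM i j)
  exact ((Matrix.isUnit_iff_isUnit_det _).mp (hunit y)).ne_zero

end MatrixContDiff

section PartialDerivative

variable {ι : Type*} [Fintype ι] [DecidableEq ι] {k : WithTop ℕ∞}

theorem ContDiff.pd {f : (ι → ℝ) → ℝ} (hf : ContDiff ℝ (k + 1) f) (i : ι) :
    ContDiff ℝ k (pd f i) :=
  (hf.fderiv_right le_rfl).clm_apply contDiff_const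

theorem pd_const (c : ℝ) (i : ι) (y : ι → ℝ) : pd (fun _ => c) i y = 0 := by
  simp [pd]

theorem pd_sum_mul {κ : Type*} (u : Finset κ) {g f : κ → (ι → ℝ) → ℝ} {y : ι → ℝ}
    (hg : ∀ s ∈ u, DifferentiableAt ℝ (g s) y) (hf : ∀ s ∈ u, DifferentiableAt ℝ (f s) y)
    (i : ι) :
    pd (fun z => ∑ s ∈ u, g s z * f s z) i y
      = ∑ s ∈ u, (pd (g s) i y * f s y + g s y * pd (f s) i y) := by
  rw [pd, fderiv_fun_sum (A := fun s z => g s z * f s z) fun s hs => (hg s hs).mul (hf s hs),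
    _root_.sum_apply]
  refine Finset.sum_congr rfl fun s hs => ?_
  rw [fderiv_fun_mul (hg s hs) (hf s hs)]
  simp only [_root_.add_apply, _root_.smul_apply, smul_eq_mul, pd]
  ring

end PartialDerivative

theorem Matrix.transpose_mul_one_sub_mul_inv_mul_eq_zero {R m n : Type*} [CommRing R]
    [Fintype m] [Fintype n] [DecidableEq m] [DecidableEq n] (J : Matrix m n R)
    (A : Matrix m m R) (hJ : IsUnit (Jᵀ * A * J)) :
    Jᵀ * ((1 - A * J * (Jᵀ * A * J)⁻¹ * Jᵀ) * A) = 0 := by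
  have hinv : (Jᵀ * A * J) * (Jᵀ * A * J)⁻¹ = 1 :=
    Matrix.mul_nonsing_inv _ ((Matrix.isUnit_iff_isUnit_det _).mp hJ)
  simp only [Matrix.sub_mul, Matrix.mul_sub, Matrix.one_mul, ← Matrix.mul_assoc]
  rw [hinv, Matrix.one_mul, sub_self]

section ProjectedGenerator

variable {n d : ℕ} {ξ : (Fin n → ℝ) → (Fin d → ℝ)} {a : (Fin n → ℝ) → Matrix (Fin n) (Fin n) ℝ}
  {k : WithTop ℕ∞}

theorem contDiff_jac_apply (hξ : ContDiff ℝ (k + 1) ξ) (i : Fin n) (γ : Fin d) :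
    ContDiff ℝ k fun y => jac ξ y i γ :=
  (contDiff_pi.mp hξ γ).pd i

theorem contDiff_projMat_mul_apply (hξ : ContDiff ℝ (k + 1) ξ)
    (ha : ∀ i j, ContDiff ℝ k fun y => a y i j)
    (hΨ : ∀ y, IsUnit ((jac ξ y)ᵀ * a y * jac ξ y)) (i j : Fin n) :
    ContDiff ℝ k fun y => (projMat ξ a y * a y) i j := by
  have hJ := contDiff_jac_apply hξ
  have hJt : ∀ γ i, ContDiff ℝ k fun y => (jac ξ y)ᵀ γ i := fun γ i => hJ i γ
  have hΨinv := contDiff_matrix_inv_apply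
    (contDiff_matrix_mul_apply (contDiff_matrix_mul_apply hJt ha) hJ) hΨ
  refine contDiff_matrix_mul_apply (fun i j => ?_) ha i j
  simp only [projMat, Matrix.sub_apply]
  exact contDiff_const.sub (contDiff_matrix_mul_apply (contDiff_matrix_mul_apply
    (contDiff_matrix_mul_apply ha hJ) hΨinv) hJt i j)

theorem sum_projMat_mul_apply_mul_pd_eq_zero
    (hΨ : ∀ y, IsUnit ((jac ξ y)ᵀ * a y * jac ξ y)) (γ : Fin d) (j : Fin n) (y : Fin n → ℝ) :
    ∑ i, (projMat ξ a y * a y) i j * pd (fun z => ξ z γ) i y = 0 := by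
  have h := congrFun (congrFun
    (Matrix.transpose_mul_one_sub_mul_inv_mul_eq_zero (jac ξ y) (a y) (hΨ y)) γ) j
  rw [Matrix.mul_apply] at h
  exact (Finset.sum_congr rfl fun i _ => mul_comm _ _).trans h

end ProjectedGenerator

theorem generator_annihilates_reaction_coordinate_general
    (β : ℝ)
    (n d : ℕ)
    (ξ : (Fin n → ℝ) → (Fin d → ℝ)) (hξ : ContDiff ℝ 2 ξ)
    (V : (Fin n → ℝ) → ℝ)
    (a : (Fin n → ℝ) → Matrix (Fin n) (Fin n) ℝ)
    (ha : ∀ i j, ContDiff ℝ 1 fun y => a y i j)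
    (hΨ : ∀ y, IsUnit ((jac ξ y)ᵀ * a y * jac ξ y)) :
    ∀ (γ : Fin d) (y : Fin n → ℝ),
      -(∑ i, ∑ j, (projMat ξ a y * a y) i j * pd V j y * pd (fun z => ξ z γ) i y)
        + β⁻¹ * ∑ i, ∑ j,
            pd (fun z => (projMat ξ a z * a z) i j) j y * pd (fun z => ξ z γ) i y
        + β⁻¹ * ∑ i, ∑ j,
            (projMat ξ a y * a y) i j * pd (fun z => pd (fun w => ξ w γ) i z) j y
      = 0 := by
  intro γ y
  have hPa i j : Differentiable ℝ fun z => (projMat ξ a z * a z) i j :=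
    (contDiff_projMat_mul_apply hξ ha hΨ i j).differentiable one_ne_zero
  have hdξ i : Differentiable ℝ (pd (fun z => ξ z γ) i) :=
    (contDiff_jac_apply hξ i γ).differentiable one_ne_zero
  have hdrift : ∑ i, ∑ j, (projMat ξ a y * a y) i j * pd V j y * pd (fun z => ξ z γ) i y = 0 := by
    rw [Finset.sum_comm]
    refine Finset.sum_eq_zero fun j _ => ?_
    simp_rw [mul_right_comm _ (pd V j y), ← Finset.sum_mul,
      sum_projMat_mul_apply_mul_pd_eq_zero hΨ, zero_mul]
  have hdiv : ∀ j, ∑ i, (pd (fun z => (projMat ξ a z * a z) i j) j y * pd (fun z => ξ z γ) i y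
      + (projMat ξ a y * a y) i j * pd (fun z => pd (fun w => ξ w γ) i z) j y) = 0 := by
    intro j
    rw [← pd_sum_mul _ (fun i _ => hPa i j y) (fun i _ => hdξ i y),
      funext (sum_projMat_mul_apply_mul_pd_eq_zero hΨ γ j), pd_const]
  have hsum : (∑ i, ∑ j,
        pd (fun z => (projMat ξ a z * a z) i j) j y * pd (fun z => ξ z γ) i y)
      + ∑ i, ∑ j, (projMat ξ a y * a y) i j * pd (fun z => pd (fun w => ξ w γ) i z) j y
      = 0 := by
    simp_rw [← Finset.sum_add_distrib]
    rw [Finset.sum_comm]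
    exact Finset.sum_eq_zero fun j _ => hdiv j
  linear_combination β⁻¹ * hsum - hdrift

/-- The generator `𝓛^⊥ = −(Pa)_{ij} ∂_jV ∂_i + β⁻¹ ∂_j(Pa)_{ij} ∂_i + β⁻¹ (Pa)_{ij} ∂²_{ij}`
of the projected diffusion annihilates the reaction coordinate: `𝓛^⊥ ξ_γ ≡ 0`. -/
theorem generator_annihilates_reaction_coordinate
    (β : ℝ) (hβ : 0 < β)
    (n d : ℕ) (hd : 1 ≤ d) (hdn : d < n)
    (ξ : (Fin n → ℝ) → (Fin d → ℝ)) (hξ : ContDiff ℝ 2 ξ)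
    (V : (Fin n → ℝ) → ℝ) (hV : ContDiff ℝ 1 V)
    (a : (Fin n → ℝ) → Matrix (Fin n) (Fin n) ℝ)
    (ha : ∀ i j, ContDiff ℝ 1 fun y => a y i j)
    (ha_symm : ∀ y, (a y).IsSymm) (ha_pd : ∀ y, (a y).PosDef)
    (hΨ : ∀ y, IsUnit ((jac ξ y)ᵀ * a y * jac ξ y)) :
    ∀ (γ : Fin d) (y : Fin n → ℝ),
      -(∑ i, ∑ j, (projMat ξ a y * a y) i j * pd V j y * pd (fun z => ξ z γ) i y)
        + β⁻¹ * ∑ i, ∑ j,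
            pd (fun z => (projMat ξ a z * a z) i j) j y * pd (fun z => ξ z γ) i y
        + β⁻¹ * ∑ i, ∑ j,
            (projMat ξ a y * a y) i j * pd (fun z => pd (fun w => ξ w γ) i z) j y
      = 0 :=
  generator_annihilates_reaction_coordinate_general β n d ξ hξ V a ha hΨ
end

section
/- Conjugation identity for the protocol generator (key computation in the proof of the fluctuation theorem, eq. (2.38) of the paper): setting ω := e^{-βV} g and 𝓛₂φ := f·∇φ + ε Σ_{i,j}(ααᵀ)_{ij} ∂²_{ij}φ, one has at every point of ℝᵐ: e^{-βV} 𝓛₂ g = 𝓛₂ ω + β (𝓛₂ V) ω + 2εβ (αᵀ∇V)·(αᵀ∇ω) + ε β² |αᵀ∇V|² ω. -/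
open Matrix

/-- The protocol generator `𝓛₂φ = f·∇φ + ε (ααᵀ):∇²φ`. -/
noncomputable def genL2 {m d₂ : ℕ} (ε : ℝ)
    (f : (Fin m → ℝ) → (Fin m → ℝ))
    (α : (Fin m → ℝ) → Matrix (Fin m) (Fin d₂) ℝ)
    (φ : (Fin m → ℝ) → ℝ) (y : Fin m → ℝ) : ℝ :=
  (∑ i, f y i * pd φ i y)
    + ε * ∑ i, ∑ j, (α y * (α y)ᵀ) i j * pd (fun z => pd φ i z) j y


/-!
`genL2` is a diffusion generator: it satisfies the Leibniz rule
`𝓛(ab) = a 𝓛b + b 𝓛a + 2ε Γ(a,b)` and the chain rule `𝓛(eʰ) = eʰ (𝓛h + ε Γ(h,h))`, where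
`Γ(a,b) = (αᵀ∇a)·(αᵀ∇b)`. Expanding `𝓛ω` for `ω = e^{-βV} g` with these two rules, and
`Γ(V,ω)` with the product rule for gradients, every term except `e^{-βV} 𝓛g` cancels.
-/

section Calculus

variable {ι : Type*} [Fintype ι] [DecidableEq ι]

noncomputable def grad (φ : (ι → ℝ) → ℝ) (y : ι → ℝ) : ι → ℝ := fun i => pd φ i y

noncomputable def hess (φ : (ι → ℝ) → ℝ) (y : ι → ℝ) : Matrix ι ι ℝ :=
  fun i j => pd (fun z => pd φ i z) j y

lemma pd_add {a b : (ι → ℝ) → ℝ} {y : ι → ℝ} (ha : DifferentiableAt ℝ a y)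
    (hb : DifferentiableAt ℝ b y) (i : ι) :
    pd (fun z => a z + b z) i y = pd a i y + pd b i y := by
  simp [pd, fderiv_fun_add ha hb]

lemma pd_mul {a b : (ι → ℝ) → ℝ} {y : ι → ℝ} (ha : DifferentiableAt ℝ a y)
    (hb : DifferentiableAt ℝ b y) (i : ι) :
    pd (fun z => a z * b z) i y = pd a i y * b y + a y * pd b i y := by
  simp only [pd, fderiv_fun_mul ha hb, _root_.add_apply, _root_.smul_apply, smul_eq_mul]
  ring

lemma pd_const_mul {a : (ι → ℝ) → ℝ} {y : ι → ℝ} (c : ℝ) (ha : DifferentiableAt ℝ a y)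
    (i : ι) : pd (fun z => c * a z) i y = c * pd a i y := by
  simp [pd, fderiv_const_mul ha]

lemma pd_exp {h : (ι → ℝ) → ℝ} {y : ι → ℝ} (hh : DifferentiableAt ℝ h y) (i : ι) :
    pd (fun z => Real.exp (h z)) i y = Real.exp (h y) * pd h i y := by
  simp [pd, fderiv_exp hh]

lemma differentiable_pd {a : (ι → ℝ) → ℝ} (ha : ContDiff ℝ 2 a) (i : ι) :
    Differentiable ℝ (pd a i) :=
  ((ha.fderiv_right (by norm_num)).clm_apply contDiff_const).differentiable one_ne_zero

lemma grad_mul {a b : (ι → ℝ) → ℝ} {y : ι → ℝ} (ha : DifferentiableAt ℝ a y)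
    (hb : DifferentiableAt ℝ b y) :
    grad (fun z => a z * b z) y = b y • grad a y + a y • grad b y := by
  ext i
  simp only [grad, pd_mul ha hb, Pi.add_apply, Pi.smul_apply, smul_eq_mul]
  ring

lemma grad_const_mul {a : (ι → ℝ) → ℝ} {y : ι → ℝ} (c : ℝ) (ha : DifferentiableAt ℝ a y) :
    grad (fun z => c * a z) y = c • grad a y := by
  ext i
  simp [grad, pd_const_mul c ha]

lemma grad_exp {h : (ι → ℝ) → ℝ} {y : ι → ℝ} (hh : DifferentiableAt ℝ h y) :
    grad (fun z => Real.exp (h z)) y = Real.exp (h y) • grad h y := by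
  ext i
  simp [grad, pd_exp hh]

lemma hess_mul {a b : (ι → ℝ) → ℝ} (ha : ContDiff ℝ 2 a) (hb : ContDiff ℝ 2 b) (y : ι → ℝ) :
    hess (fun z => a z * b z) y = b y • hess a y + a y • hess b y
      + vecMulVec (grad a y) (grad b y) + vecMulVec (grad b y) (grad a y) := by
  have ha' := ha.differentiable two_ne_zero
  have hb' := hb.differentiable two_ne_zero
  ext i j
  have hi : (fun z => pd (fun w => a w * b w) i z) = fun z => pd a i z * b z + a z * pd b i z :=
    funext fun z => pd_mul (ha' z) (hb' z) i
  simp only [hess, hi]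
  have hai := differentiable_pd ha i y
  have hbi := differentiable_pd hb i y
  rw [pd_add (hai.fun_mul (hb' y)) ((ha' y).fun_mul hbi), pd_mul hai (hb' y), pd_mul (ha' y) hbi]
  simp only [Matrix.add_apply, Matrix.smul_apply, hess, smul_eq_mul, vecMulVec_apply, grad]
  ring

lemma hess_const_mul {a : (ι → ℝ) → ℝ} (c : ℝ) (ha : ContDiff ℝ 2 a) (y : ι → ℝ) :
    hess (fun z => c * a z) y = c • hess a y := by
  ext i j
  have hi : (fun z => pd (fun w => c * a w) i z) = fun z => c * pd a i z :=
    funext fun z => pd_const_mul c (ha.differentiable two_ne_zero z) i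
  simp [hess, hi, pd_const_mul c (differentiable_pd ha i y)]

lemma hess_exp {h : (ι → ℝ) → ℝ} (hh : ContDiff ℝ 2 h) (y : ι → ℝ) :
    hess (fun z => Real.exp (h z)) y
      = Real.exp (h y) • (hess h y + vecMulVec (grad h y) (grad h y)) := by
  have hh' := hh.differentiable two_ne_zero
  ext i j
  have hi : (fun z => pd (fun w => Real.exp (h w)) i z) = fun z => Real.exp (h z) * pd h i z :=
    funext fun z => pd_exp (hh' z) i
  simp only [hess, hi]
  rw [pd_mul ((hh' y).exp) (differentiable_pd hh i y), pd_exp (hh' y)]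
  simp only [Matrix.smul_apply, Matrix.add_apply, hess, vecMulVec_apply, grad, smul_eq_mul]
  ring

end Calculus

section Pairing

variable {ι κ : Type*} [Fintype ι] [Fintype κ] (σ : Matrix ι κ ℝ)

def diffusionPairing (M : Matrix ι ι ℝ) : ℝ :=
  ∑ i, ∑ j, (σ * σᵀ) i j * M i j

lemma diffusionPairing_add (M N : Matrix ι ι ℝ) :
    diffusionPairing σ (M + N) = diffusionPairing σ M + diffusionPairing σ N := by
  simp only [diffusionPairing, Matrix.add_apply, mul_add, Finset.sum_add_distrib]

lemma diffusionPairing_smul (c : ℝ) (M : Matrix ι ι ℝ) :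
    diffusionPairing σ (c • M) = c * diffusionPairing σ M := by
  simp only [diffusionPairing, Matrix.smul_apply, smul_eq_mul, Finset.mul_sum, mul_left_comm]

lemma diffusionPairing_vecMulVec (u v : ι → ℝ) :
    diffusionPairing σ (vecMulVec u v) = (σᵀ *ᵥ u) ⬝ᵥ (σᵀ *ᵥ v) := by
  rw [mulVec_transpose, ← dotProduct_mulVec, mulVec_mulVec]
  simp only [diffusionPairing, dotProduct, mulVec, vecMulVec_apply, Finset.mul_sum]
  exact Finset.sum_congr rfl fun i _ => Finset.sum_congr rfl fun j _ => by ring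

end Pairing

section Generator

variable {m d₂ : ℕ} (ε : ℝ) (f : (Fin m → ℝ) → (Fin m → ℝ))
  (α : (Fin m → ℝ) → Matrix (Fin m) (Fin d₂) ℝ)

-- The carré du champ of `genL2` is `ε * carreDuChamp α`.
noncomputable def carreDuChamp (a b : (Fin m → ℝ) → ℝ) (y : Fin m → ℝ) : ℝ :=
  ((α y)ᵀ *ᵥ grad a y) ⬝ᵥ ((α y)ᵀ *ᵥ grad b y)

lemma genL2_eq (φ : (Fin m → ℝ) → ℝ) (y : Fin m → ℝ) :
    genL2 ε f α φ y = f y ⬝ᵥ grad φ y + ε * diffusionPairing (α y) (hess φ y) :=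
  rfl

lemma genL2_mul {a b : (Fin m → ℝ) → ℝ} (ha : ContDiff ℝ 2 a) (hb : ContDiff ℝ 2 b)
    (y : Fin m → ℝ) :
    genL2 ε f α (fun z => a z * b z) y
      = a y * genL2 ε f α b y + b y * genL2 ε f α a y + 2 * ε * carreDuChamp α a b y := by
  simp only [genL2_eq, grad_mul (ha.differentiable two_ne_zero y) (hb.differentiable two_ne_zero y),
    hess_mul ha hb, dotProduct_add, dotProduct_smul, diffusionPairing_add, diffusionPairing_smul,
    diffusionPairing_vecMulVec, smul_eq_mul, carreDuChamp]
  rw [dotProduct_comm ((α y)ᵀ *ᵥ grad b y)]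
  ring

lemma genL2_const_mul {a : (Fin m → ℝ) → ℝ} (c : ℝ) (ha : ContDiff ℝ 2 a) (y : Fin m → ℝ) :
    genL2 ε f α (fun z => c * a z) y = c * genL2 ε f α a y := by
  simp only [genL2_eq, grad_const_mul c (ha.differentiable two_ne_zero y), hess_const_mul c ha,
    dotProduct_smul, diffusionPairing_smul, smul_eq_mul]
  ring

lemma genL2_exp {h : (Fin m → ℝ) → ℝ} (hh : ContDiff ℝ 2 h) (y : Fin m → ℝ) :
    genL2 ε f α (fun z => Real.exp (h z)) y
      = Real.exp (h y) * (genL2 ε f α h y + ε * carreDuChamp α h h y) := by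
  simp only [genL2_eq, grad_exp (hh.differentiable two_ne_zero y), hess_exp hh, dotProduct_smul,
    diffusionPairing_smul, diffusionPairing_add, diffusionPairing_vecMulVec, smul_eq_mul,
    carreDuChamp]
  ring

lemma carreDuChamp_apply (a b : (Fin m → ℝ) → ℝ) (y : Fin m → ℝ) :
    carreDuChamp α a b y = ∑ k, (∑ i, α y i k * pd a i y) * (∑ i, α y i k * pd b i y) :=
  rfl

lemma carreDuChamp_self (a : (Fin m → ℝ) → ℝ) (y : Fin m → ℝ) :
    carreDuChamp α a a y = ∑ k, (∑ i, α y i k * pd a i y) ^ 2 := by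
  simp only [carreDuChamp_apply, sq]

end Generator

theorem conjugation_identity_protocol_general
    (β ε : ℝ)
    (m d₂ : ℕ)
    (V g : (Fin m → ℝ) → ℝ) (hV : ContDiff ℝ 2 V) (hg : ContDiff ℝ 2 g)
    (f : (Fin m → ℝ) → (Fin m → ℝ))
    (α : (Fin m → ℝ) → Matrix (Fin m) (Fin d₂) ℝ) :
    ∀ y : Fin m → ℝ,
      Real.exp (-β * V y) * genL2 ε f α g y
        = genL2 ε f α (fun z => Real.exp (-β * V z) * g z) y
          + β * genL2 ε f α V y * (Real.exp (-β * V y) * g y)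
          + 2 * ε * β * (∑ k, (∑ i, α y i k * pd V i y)
              * (∑ i, α y i k * pd (fun z => Real.exp (-β * V z) * g z) i y))
          + ε * β ^ 2 * (∑ k, (∑ i, α y i k * pd V i y) ^ 2)
              * (Real.exp (-β * V y) * g y) := by
  intro y
  have hβV : ContDiff ℝ 2 fun z => -β * V z := contDiff_const.mul hV
  have hE : ContDiff ℝ 2 fun z => Real.exp (-β * V z) := Real.contDiff_exp.comp hβV
  have hV' := hV.differentiable two_ne_zero y
  have hg' := hg.differentiable two_ne_zero y
  have hβV' := hβV.differentiable two_ne_zero y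
  rw [← carreDuChamp_apply, ← carreDuChamp_self, genL2_mul ε f α hE hg, genL2_exp ε f α hβV,
    genL2_const_mul ε f α (-β) hV]
  simp only [carreDuChamp, grad_mul (hE.differentiable two_ne_zero y) hg', grad_exp hβV',
    grad_const_mul (-β) hV', mulVec_add, mulVec_smul, dotProduct_add, dotProduct_smul,
    smul_dotProduct, smul_eq_mul]
  ring

/-- Conjugation identity for the protocol generator (paper eq. (2.38)): with
`ω = e^{-βV} g`, one has
`e^{-βV} 𝓛₂g = 𝓛₂ω + β(𝓛₂V)ω + 2εβ (αᵀ∇V)·(αᵀ∇ω) + εβ²|αᵀ∇V|² ω`. -/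
theorem conjugation_identity_protocol
    (β ε : ℝ) (hβ : 0 < β) (hε : 0 ≤ ε)
    (m d₂ : ℕ) (hm : 1 ≤ m) (hd₂ : 1 ≤ d₂)
    (V g : (Fin m → ℝ) → ℝ) (hV : ContDiff ℝ 2 V) (hg : ContDiff ℝ 2 g)
    (f : (Fin m → ℝ) → (Fin m → ℝ)) (hf : Continuous f)
    (α : (Fin m → ℝ) → Matrix (Fin m) (Fin d₂) ℝ) (hα : Continuous α) :
    ∀ y : Fin m → ℝ,
      Real.exp (-β * V y) * genL2 ε f α g y
        = genL2 ε f α (fun z => Real.exp (-β * V z) * g z) y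
          + β * genL2 ε f α V y * (Real.exp (-β * V y) * g y)
          + 2 * ε * β * (∑ k, (∑ i, α y i k * pd V i y)
              * (∑ i, α y i k * pd (fun z => Real.exp (-β * V z) * g z) i y))
          + ε * β ^ 2 * (∑ k, (∑ i, α y i k * pd V i y) ^ 2)
              * (Real.exp (-β * V y) * g y) :=
  conjugation_identity_protocol_general β ε m d₂ V g hV hg f α
end
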